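/- For every β > 0 and integer n ≥ 2, the function R(d) = ( n(e^{βd}−1)²((n−1)(2n−1)d²+6)/6 + (e^{βd}−1)(n(n−1)d²+2) + (n−1)d² )² / ( d²(n−1)(e^{βd}−1)( n(n+1)(e^{βd}−1)²/12 + (n+1)(e^{βd}−1)/2 + 1 )( n(e^{βd}−1)+2 ) ) satisfies lim_{d→∞} R(d) = ∞ and lim_{d→0+} R(d) = ∞. -/
import Mathlib

open Real Filter

/-- exp x ≤ 1 + 2x on [0, 1/2]. -/
lemma exp_le_one_add_two_mul {x : ℝ} (h0 : 0 ≤ x) (h : x ≤ 1/2) :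
    Real.exp x ≤ 1 + 2 * x := by
  have h2 : 0 < 1 - x := by linarith
  have h1 : 1 - x ≤ Real.exp (-x) := by have := Real.add_one_le_exp (-x); linarith
  have h3 : Real.exp x ≤ (1 - x)⁻¹ := by
    rw [Real.exp_neg] at h1
    calc Real.exp x = ((Real.exp x)⁻¹)⁻¹ := (inv_inv _).symm
    _ ≤ (1 - x)⁻¹ := inv_anti₀ h2 h1
  have h4 : (1 - x)⁻¹ ≤ 1 + 2 * x := by
    rw [inv_eq_one_div, div_le_iff₀ h2]; nlinarith
  linarith

set_option maxHeartbeats 1600000 in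
lemma aux_atTop (m E d : ℝ) (hm : 2 ≤ m) (hE : 1 ≤ E) (hd : 0 < d) :
    (m * (m - 1) * (2 * m - 1) / 6) ^ 2 / ((m - 1) * (m + 2) ^ 3) * d ^ 2 ≤
      (m * E ^ 2 * ((m - 1) * (2 * m - 1) * d ^ 2 + 6) / 6 +
          E * (m * (m - 1) * d ^ 2 + 2) + (m - 1) * d ^ 2) ^ 2 /
        (d ^ 2 * (m - 1) * E *
          (m * (m + 1) * E ^ 2 / 12 + (m + 1) * E / 2 + 1) * (m * E + 2)) := by
  have hm1 : (0:ℝ) < m - 1 := by linarith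
  have hm0 : (0:ℝ) < m := by linarith
  have hE0 : (0:ℝ) < E := by linarith
  have hd2 : (0:ℝ) < d ^ 2 := pow_pos hd 2
  set c1 : ℝ := m * (m - 1) * (2 * m - 1) / 6 with hc1
  have hc1pos : 0 < c1 := by
    rw [hc1]
    have := mul_pos (mul_pos hm0 hm1) (show (0:ℝ) < 2 * m - 1 by linarith)
    linarith
  set A : ℝ := m * E ^ 2 * ((m - 1) * (2 * m - 1) * d ^ 2 + 6) / 6 +
      E * (m * (m - 1) * d ^ 2 + 2) + (m - 1) * d ^ 2 with hA
  set Q : ℝ := m * (m + 1) * E ^ 2 / 12 + (m + 1) * E / 2 + 1 with hQ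
  set D : ℝ := d ^ 2 * (m - 1) * E * Q * (m * E + 2) with hD
  have ht1 : (0:ℝ) ≤ m * E ^ 2 := mul_nonneg hm0.le (sq_nonneg E)
  have ht2 : (0:ℝ) ≤ E * (m * (m - 1) * d ^ 2 + 2) := by
    have h0 : (0:ℝ) ≤ m * (m - 1) * d ^ 2 :=
      mul_nonneg (mul_nonneg hm0.le hm1.le) (sq_nonneg d)
    exact mul_nonneg hE0.le (by linarith)
  have ht3 : (0:ℝ) ≤ (m - 1) * d ^ 2 := mul_nonneg hm1.le (sq_nonneg d)
  have hid : A = c1 * (E ^ 2 * d ^ 2) +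
      (m * E ^ 2 + E * (m * (m - 1) * d ^ 2 + 2) + (m - 1) * d ^ 2) := by
    rw [hA, hc1]; ring
  have hAlb : c1 * (E ^ 2 * d ^ 2) ≤ A := by rw [hid]; linarith
  have hQpos : 0 < Q := by
    rw [hQ]
    have h0 : (0:ℝ) ≤ m * (m + 1) * E ^ 2 / 12 := by
      have := mul_nonneg (mul_nonneg hm0.le (show (0:ℝ) ≤ m + 1 by linarith)) (sq_nonneg E)
      linarith
    have h1 : (0:ℝ) ≤ (m + 1) * E / 2 := by
      have := mul_nonneg (show (0:ℝ) ≤ m + 1 by linarith) hE0.le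
      linarith
    linarith
  have hL0 : (0:ℝ) < m * E + 2 := by
    have := mul_nonneg hm0.le hE0.le; linarith
  have hDpos : 0 < D := by
    rw [hD]
    exact mul_pos (mul_pos (mul_pos (mul_pos hd2 hm1) hE0) hQpos) hL0
  -- Q ≤ ((m+2)E)²
  have hE2 : E ≤ E ^ 2 := by nlinarith [mul_le_mul_of_nonneg_right hE hE0.le]
  have hE3 : (1:ℝ) ≤ E ^ 2 := by linarith
  have hco : m * (m + 1) / 12 + (m + 1) / 2 + 1 ≤ (m + 2) ^ 2 := by nlinarith [sq_nonneg m]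
  have h1 := mul_le_mul_of_nonneg_left hE2 (show (0:ℝ) ≤ (m + 1) / 2 by linarith)
  have h3 := mul_le_mul_of_nonneg_right hco (sq_nonneg E)
  have hQle : Q ≤ ((m + 2) * E) ^ 2 := by
    rw [hQ]
    have hm12 : (0:ℝ) ≤ m * (m + 1) / 12 := by
      have := mul_nonneg hm0.le (show (0:ℝ) ≤ m + 1 by linarith); linarith
    nlinarith [h1, h3, hE3, mul_le_mul_of_nonneg_left hE3 hm12]
  have hLle : m * E + 2 ≤ (m + 2) * E := by nlinarith [hE]
  have hX : (0:ℝ) ≤ d ^ 2 * (m - 1) * E :=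
    mul_nonneg (mul_nonneg (sq_nonneg d) hm1.le) hE0.le
  have hDub : D ≤ (m - 1) * (m + 2) ^ 3 * (E ^ 4 * d ^ 2) := by
    rw [hD]
    calc d ^ 2 * (m - 1) * E * Q * (m * E + 2)
        ≤ d ^ 2 * (m - 1) * E * ((m + 2) * E) ^ 2 * ((m + 2) * E) := by
          apply mul_le_mul (mul_le_mul_of_nonneg_left hQle hX) hLle hL0.le
          exact mul_nonneg hX (sq_nonneg _)
      _ = (m - 1) * (m + 2) ^ 3 * (E ^ 4 * d ^ 2) := by ring
  have hNlb : (c1 * (E ^ 2 * d ^ 2)) ^ 2 ≤ A ^ 2 :=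
    pow_le_pow_left₀ (mul_nonneg hc1pos.le (by positivity)) hAlb 2
  have key : (c1 * (E ^ 2 * d ^ 2)) ^ 2 / ((m - 1) * (m + 2) ^ 3 * (E ^ 4 * d ^ 2))
      ≤ A ^ 2 / D :=
    div_le_div₀ (sq_nonneg A) hNlb hDpos hDub
  have hden : (0:ℝ) < (m - 1) * (m + 2) ^ 3 * (E ^ 4 * d ^ 2) :=
    mul_pos (mul_pos hm1 (by positivity)) (mul_pos (by positivity) hd2)
  have heq : (c1 * (E ^ 2 * d ^ 2)) ^ 2 / ((m - 1) * (m + 2) ^ 3 * (E ^ 4 * d ^ 2))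
      = c1 ^ 2 / ((m - 1) * (m + 2) ^ 3) * d ^ 2 := by
    have hne1 : m - 1 ≠ 0 := hm1.ne'
    have hne2 : m + 2 ≠ 0 := by positivity
    have hEne : E ≠ 0 := hE0.ne'
    have hdne : d ≠ 0 := hd.ne'
    field_simp
  rw [← heq]; exact key

set_option maxHeartbeats 1600000 in
lemma aux_zero (m β E d : ℝ) (hm : 2 ≤ m) (hβ : 0 < β) (hd : 0 < d)
    (hElb : β * d ≤ E) (hEub : E ≤ 2 * (β * d)) (hE1 : E ≤ 1) :
    4 * β ^ 2 / (2 * β * (m - 1) * (m + 2) ^ 3) * d⁻¹ ≤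
      (m * E ^ 2 * ((m - 1) * (2 * m - 1) * d ^ 2 + 6) / 6 +
          E * (m * (m - 1) * d ^ 2 + 2) + (m - 1) * d ^ 2) ^ 2 /
        (d ^ 2 * (m - 1) * E *
          (m * (m + 1) * E ^ 2 / 12 + (m + 1) * E / 2 + 1) * (m * E + 2)) := by
  have hm1 : (0:ℝ) < m - 1 := by linarith
  have hm0 : (0:ℝ) < m := by linarith
  have hE0 : (0:ℝ) < E := lt_of_lt_of_le (mul_pos hβ hd) hElb
  have hd2 : (0:ℝ) < d ^ 2 := pow_pos hd 2
  set A : ℝ := m * E ^ 2 * ((m - 1) * (2 * m - 1) * d ^ 2 + 6) / 6 +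
      E * (m * (m - 1) * d ^ 2 + 2) + (m - 1) * d ^ 2 with hA
  set Q : ℝ := m * (m + 1) * E ^ 2 / 12 + (m + 1) * E / 2 + 1 with hQ
  set D : ℝ := d ^ 2 * (m - 1) * E * Q * (m * E + 2) with hD
  have hQpos : 0 < Q := by
    rw [hQ]
    have h0 : (0:ℝ) ≤ m * (m + 1) * E ^ 2 / 12 := by
      have := mul_nonneg (mul_nonneg hm0.le (show (0:ℝ) ≤ m + 1 by linarith)) (sq_nonneg E)
      linarith
    have h1 : (0:ℝ) ≤ (m + 1) * E / 2 := by
      have := mul_nonneg (show (0:ℝ) ≤ m + 1 by linarith) hE0.le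
      linarith
    linarith
  have hL0 : (0:ℝ) < m * E + 2 := by
    have := mul_nonneg hm0.le hE0.le; linarith
  have hDpos : 0 < D := by
    rw [hD]
    exact mul_pos (mul_pos (mul_pos (mul_pos hd2 hm1) hE0) hQpos) hL0
  have ht0 : (0:ℝ) ≤ m * (m - 1) * d ^ 2 :=
    mul_nonneg (mul_nonneg hm0.le hm1.le) (sq_nonneg d)
  have hAlb : 2 * (β * d) ≤ A := by
    rw [hA]
    have h6 : (0:ℝ) ≤ m * E ^ 2 * ((m - 1) * (2 * m - 1) * d ^ 2 + 6) / 6 := by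
      have hq : (0:ℝ) ≤ (m - 1) * (2 * m - 1) * d ^ 2 :=
        mul_nonneg (mul_nonneg hm1.le (by linarith)) (sq_nonneg d)
      have := mul_nonneg (mul_nonneg hm0.le (sq_nonneg E))
        (by linarith : (0:ℝ) ≤ (m - 1) * (2 * m - 1) * d ^ 2 + 6)
      linarith
    have h7 : 2 * (β * d) ≤ E * (m * (m - 1) * d ^ 2 + 2) := by
      have h71 : 2 * (β * d) ≤ 2 * E := by linarith
      have h72 : E * 2 ≤ E * (m * (m - 1) * d ^ 2 + 2) :=
        mul_le_mul_of_nonneg_left (by linarith) hE0.le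
      linarith [mul_comm E 2]
    have h8 : (0:ℝ) ≤ (m - 1) * d ^ 2 := mul_nonneg hm1.le (sq_nonneg d)
    linarith
  have hQle : Q ≤ (m + 2) ^ 2 := by
    rw [hQ]
    have hE2 : E ^ 2 ≤ 1 := by nlinarith [mul_le_mul_of_nonneg_right hE1 hE0.le]
    have hm12 : (0:ℝ) ≤ m * (m + 1) / 12 := by
      have := mul_nonneg hm0.le (show (0:ℝ) ≤ m + 1 by linarith); linarith
    have h1 : m * (m + 1) * E ^ 2 / 12 ≤ m * (m + 1) / 12 := by
      have := mul_le_mul_of_nonneg_left hE2 hm12; linarith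
    have h2 : (m + 1) * E / 2 ≤ (m + 1) / 2 := by
      have := mul_le_mul_of_nonneg_left hE1 (show (0:ℝ) ≤ (m + 1) / 2 by linarith)
      linarith
    nlinarith [sq_nonneg m]
  have hLle : m * E + 2 ≤ m + 2 := by
    have := mul_le_mul_of_nonneg_left hE1 hm0.le; linarith
  have hX : (0:ℝ) ≤ d ^ 2 * (m - 1) := mul_nonneg (sq_nonneg d) hm1.le
  have hDub : D ≤ 2 * β * (m - 1) * (m + 2) ^ 3 * d ^ 3 := by
    rw [hD]
    calc d ^ 2 * (m - 1) * E * Q * (m * E + 2)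
        ≤ d ^ 2 * (m - 1) * (2 * (β * d)) * (m + 2) ^ 2 * (m + 2) := by
          apply mul_le_mul _ hLle hL0.le
          · exact mul_nonneg (mul_nonneg hX (by positivity)) (by positivity)
          · apply mul_le_mul _ hQle hQpos.le
            · exact mul_nonneg hX (by positivity)
            · exact mul_le_mul_of_nonneg_left hEub hX
      _ = 2 * β * (m - 1) * (m + 2) ^ 3 * d ^ 3 := by ring
  have hc3 : (0:ℝ) < 2 * β * (m - 1) * (m + 2) ^ 3 :=
    mul_pos (mul_pos (by positivity) hm1) (by positivity)
  have hNlb : (2 * (β * d)) ^ 2 ≤ A ^ 2 := pow_le_pow_left₀ (by positivity) hAlb 2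
  have key : (2 * (β * d)) ^ 2 / (2 * β * (m - 1) * (m + 2) ^ 3 * d ^ 3) ≤ A ^ 2 / D :=
    div_le_div₀ (sq_nonneg A) hNlb hDpos hDub
  have heq : (2 * (β * d)) ^ 2 / (2 * β * (m - 1) * (m + 2) ^ 3 * d ^ 3)
      = 4 * β ^ 2 / (2 * β * (m - 1) * (m + 2) ^ 3) * d⁻¹ := by
    have hβne : β ≠ 0 := hβ.ne'
    have hdne : d ≠ 0 := hd.ne'
    have hne1 : m - 1 ≠ 0 := hm1.ne'
    have hne2 : m + 2 ≠ 0 := by positivity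
    field_simp
    ring
  rw [← heq]; exact key

/-- The closed form of the K-optimality objective
`R(d) = (L1+L3)²/(L1·L3 − L2²)` for the equidistant design with `n` points and
step size `d`. -/
noncomputable def Rcl (β : ℝ) (n : ℕ) (d : ℝ) : ℝ :=
  ((n : ℝ) * (exp (β * d) - 1) ^ 2 * (((n : ℝ) - 1) * (2 * n - 1) * d ^ 2 + 6) / 6 +
      (exp (β * d) - 1) * ((n : ℝ) * (n - 1) * d ^ 2 + 2) + ((n : ℝ) - 1) * d ^ 2) ^ 2 /
    (d ^ 2 * ((n : ℝ) - 1) * (exp (β * d) - 1) *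
      ((n : ℝ) * (n + 1) * (exp (β * d) - 1) ^ 2 / 12 + ((n : ℝ) + 1) * (exp (β * d) - 1) / 2 + 1) *
      ((n : ℝ) * (exp (β * d) - 1) + 2))

set_option maxHeartbeats 1600000 in
/-- `R(d) → ∞` both as `d → ∞` and as `d → 0+`. -/
theorem Rcl_limits (β : ℝ) (hβ : 0 < β) (n : ℕ) (hn : 2 ≤ n) :
    Tendsto (Rcl β n) atTop atTop ∧
    Tendsto (Rcl β n) (nhdsWithin 0 (Set.Ioi 0)) atTop := by
  have hm : (2:ℝ) ≤ (n:ℝ) := by exact_mod_cast hn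
  have hm1 : (0:ℝ) < (n:ℝ) - 1 := by linarith
  have hm2 : (0:ℝ) < (n:ℝ) + 2 := by linarith
  constructor
  · -- d → ∞
    have hc2pos : 0 < ((n:ℝ) * ((n:ℝ) - 1) * (2 * (n:ℝ) - 1) / 6) ^ 2 /
        (((n:ℝ) - 1) * ((n:ℝ) + 2) ^ 3) := by
      have h0 : (0:ℝ) < (n:ℝ) * ((n:ℝ) - 1) * (2 * (n:ℝ) - 1) / 6 := by
        have := mul_pos (mul_pos (show (0:ℝ) < (n:ℝ) by linarith) hm1)
          (show (0:ℝ) < 2 * (n:ℝ) - 1 by linarith)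
        linarith
      exact div_pos (pow_pos h0 2) (mul_pos hm1 (pow_pos hm2 3))
    apply tendsto_atTop_mono'
      atTop (f₁ := fun d => ((n:ℝ) * ((n:ℝ) - 1) * (2 * (n:ℝ) - 1) / 6) ^ 2 /
        (((n:ℝ) - 1) * ((n:ℝ) + 2) ^ 3) * d ^ 2)
    · filter_upwards [eventually_ge_atTop (1/β)] with d hd
      have hd0 : 0 < d := lt_of_lt_of_le (by positivity) hd
      have hbd : 1 ≤ β * d := by
        rw [div_le_iff₀ hβ] at hd
        calc (1:ℝ) ≤ d * β := hd
        _ = β * d := mul_comm d β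
      have hE1 : 1 ≤ exp (β * d) - 1 := by have := Real.add_one_le_exp (β * d); linarith
      unfold Rcl
      exact aux_atTop (n:ℝ) (exp (β * d) - 1) d hm hE1 hd0
    · exact (tendsto_pow_atTop two_ne_zero).const_mul_atTop hc2pos
  · -- d → 0+
    have hc3 : (0:ℝ) < 2 * β * ((n:ℝ) - 1) * ((n:ℝ) + 2) ^ 3 :=
      mul_pos (mul_pos (by positivity) hm1) (pow_pos hm2 3)
    apply tendsto_atTop_mono' _
      (f₁ := fun d => 4 * β ^ 2 / (2 * β * ((n:ℝ) - 1) * ((n:ℝ) + 2) ^ 3) * d⁻¹)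
    · filter_upwards [Ioo_mem_nhdsGT_of_mem
        (Set.mem_Ico.mpr ⟨le_refl (0:ℝ), show (0:ℝ) < 1 / (2 * β) by positivity⟩)] with d hd
      obtain ⟨hd0, hdub⟩ := hd
      have hbd : β * d ≤ 1/2 := by
        rw [lt_div_iff₀ (by positivity : (0:ℝ) < 2 * β)] at hdub
        nlinarith
      have hbd0 : 0 < β * d := mul_pos hβ hd0
      have hElb : β * d ≤ exp (β * d) - 1 := by
        have := Real.add_one_le_exp (β * d); linarith
      have hEub : exp (β * d) - 1 ≤ 2 * (β * d) := by
        have := exp_le_one_add_two_mul hbd0.le hbd; linarith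
      have hE1 : exp (β * d) - 1 ≤ 1 := by linarith
      unfold Rcl
      exact aux_zero (n:ℝ) β (exp (β * d) - 1) d hm hβ hd0 hElb hEub hE1
    · exact tendsto_inv_nhdsGT_zero.const_mul_atTop (div_pos (by positivity) hc3)
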